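/- Second fundamental theorem of F^α-calculus: let f : F → ℝ be such that (D_F^α f)(θ) exists for all θ ∈ C(a,b) = w([a,b]) and let h : F → ℝ be F-continuous with h(θ) = (D_F^α f)(θ) on C(a,b). Then ∫_{C(a,b)} h(θ) d_F^α θ = f(w(b)) − f(w(a)). -/

import Mathlib

/-!
Pulled back along `w`, the F^α-derivative becomes a derivative of `f ∘ w` with respect to the
strictly increasing function `S = S_F^α`. A real-induction argument (a mean value inequality)
then bounds every increment `f (w t') - f (w t)` between `inf h · (S t' - S t)` and
`sup h · (S t' - S t)` over `w [t, t']`, so by telescoping every lower sum is at most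
`f (w b) - f (w a)` and every upper sum at least that. Since `h ∘ w` is uniformly continuous on
`[a, b]`, upper and lower sums over fine subdivisions differ by arbitrarily little.
-/

open Set
open scoped ENNReal

structure Subdivision (a b : ℝ) where
  k : ℕ
  t : ℕ → ℝ
  first : t 0 = a
  last : t k = b
  mono : ∀ i < k, t i < t (i + 1)

def Subdivision.MeshLE {a b : ℝ} (P : Subdivision a b) (δ : ℝ) : Prop :=
  ∀ i < P.k, P.t (i + 1) - P.t i ≤ δ

noncomputable def sigmaSum {n : ℕ} (α : ℝ) (w : ℝ → EuclideanSpace ℝ (Fin n))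
    {a b : ℝ} (P : Subdivision a b) : ℝ :=
  (∑ i ∈ Finset.range P.k, ‖w (P.t (i + 1)) - w (P.t i)‖ ^ α) / Real.Gamma (α + 1)

noncomputable def gammaDelta {n : ℕ} (α : ℝ) (w : ℝ → EuclideanSpace ℝ (Fin n))
    (a b δ : ℝ) : ℝ≥0∞ :=
  ⨅ (P : Subdivision a b) (_ : P.MeshLE δ), ENNReal.ofReal (sigmaSum α w P)

noncomputable def massFn {n : ℕ} (α : ℝ) (w : ℝ → EuclideanSpace ℝ (Fin n))
    (a b : ℝ) : ℝ≥0∞ :=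
  ⨆ (δ : ℝ) (_ : 0 < δ), gammaDelta α w a b δ

/-- The staircase (rise) function S_F^α(t) = γ^α(F,a₀,t). -/
noncomputable def SF {n : ℕ} (α : ℝ) (w : ℝ → EuclideanSpace ℝ (Fin n))
    (a₀ : ℝ) (t : ℝ) : ℝ :=
  (massFn α w a₀ t).toReal

/-- `l` is the F-limit of `f` as θ' → θ through points of `F`. -/
def IsFLimit {n : ℕ} (F : Set (EuclideanSpace ℝ (Fin n)))
    (f : EuclideanSpace ℝ (Fin n) → ℝ) (θ : EuclideanSpace ℝ (Fin n)) (l : ℝ) : Prop :=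
  ∀ ε > (0 : ℝ), ∃ δ > (0 : ℝ), ∀ θ' ∈ F, θ' ≠ θ → ‖θ' - θ‖ < δ → |f θ' - l| < ε

/-- `f` is F-continuous at θ. -/
def FContinuousAt {n : ℕ} (F : Set (EuclideanSpace ℝ (Fin n)))
    (f : EuclideanSpace ℝ (Fin n) → ℝ) (θ : EuclideanSpace ℝ (Fin n)) : Prop :=
  IsFLimit F f θ (f θ)

/-- The F^α-derivative of `f` at θ is `l`:
l = F-lim_{θ'→θ} (f(θ') − f(θ))/(J(θ') − J(θ)). -/
def HasFAlphaDerivAt {n : ℕ} (F : Set (EuclideanSpace ℝ (Fin n)))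
    (J : EuclideanSpace ℝ (Fin n) → ℝ) (f : EuclideanSpace ℝ (Fin n) → ℝ)
    (θ : EuclideanSpace ℝ (Fin n)) (l : ℝ) : Prop :=
  IsFLimit F (fun θ' => (f θ' - f θ) / (J θ' - J θ)) θ l

/-- Upper F^α-sum U^α[f,F,P] of `f` over the subdivision `P`. -/
noncomputable def upperFSum {n : ℕ} (α : ℝ) (w : ℝ → EuclideanSpace ℝ (Fin n))
    (a₀ : ℝ) (f : EuclideanSpace ℝ (Fin n) → ℝ) {a b : ℝ} (P : Subdivision a b) : ℝ :=
  ∑ i ∈ Finset.range P.k,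
    sSup (f '' (w '' Icc (P.t i) (P.t (i + 1)))) *
      (SF α w a₀ (P.t (i + 1)) - SF α w a₀ (P.t i))

/-- Lower F^α-sum L^α[f,F,P] of `f` over the subdivision `P`. -/
noncomputable def lowerFSum {n : ℕ} (α : ℝ) (w : ℝ → EuclideanSpace ℝ (Fin n))
    (a₀ : ℝ) (f : EuclideanSpace ℝ (Fin n) → ℝ) {a b : ℝ} (P : Subdivision a b) : ℝ :=
  ∑ i ∈ Finset.range P.k,
    sInf (f '' (w '' Icc (P.t i) (P.t (i + 1)))) *
      (SF α w a₀ (P.t (i + 1)) - SF α w a₀ (P.t i))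

/-- `f` is F^α-integrable on C(a,b) with integral `v`:
inf of upper sums = sup of lower sums = v. -/
def HasFIntegral {n : ℕ} (α : ℝ) (w : ℝ → EuclideanSpace ℝ (Fin n)) (a₀ : ℝ)
    (f : EuclideanSpace ℝ (Fin n) → ℝ) (a b : ℝ) (v : ℝ) : Prop :=
  sInf (Set.range fun P : Subdivision a b => upperFSum α w a₀ f P) = v ∧
  sSup (Set.range fun P : Subdivision a b => lowerFSum α w a₀ f P) = v


open Filter Topology

theorem le_of_eventually_nhdsLT_of_eventually_nhdsGT {α β : Type*}
    [ConditionallyCompleteLinearOrder α] [TopologicalSpace α] [OrderTopology α]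
    [DenselyOrdered α] [Preorder β] {φ : α → β} {u v : α} (huv : u ≤ v)
    (hleft : ∀ t ∈ Ioc u v, ∀ᶠ s in 𝓝[<] t, φ s ≤ φ t)
    (hright : ∀ t ∈ Ico u v, ∀ᶠ s in 𝓝[>] t, φ t ≤ φ s) :
    φ u ≤ φ v := by
  set A := {t ∈ Icc u v | φ u ≤ φ t}
  have huA : u ∈ A := ⟨left_mem_Icc.2 huv, le_rfl⟩
  have hA : BddAbove A := ⟨v, fun t ht => ht.1.2⟩
  set c := sSup A
  have hc : c ∈ Icc u v := ⟨le_csSup hA huA, csSup_le ⟨u, huA⟩ fun t ht => ht.1.2⟩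
  have hcA : c ∈ A := by
    rcases hc.1.eq_or_lt with hcu | hcu
    · rwa [← hcu]
    have hle : ∀ᶠ s in 𝓝[≤] c, φ s ≤ φ c := by
      rw [← Iio_insert, nhdsWithin_insert, eventually_sup, eventually_pure]
      exact ⟨le_rfl, hleft c ⟨hcu, hc.2⟩⟩
    obtain ⟨s, hsA, hs⟩ := ((isLUB_csSup ⟨u, huA⟩ hA).frequently_mem ⟨u, huA⟩).and_eventually
      hle |>.exists
    exact ⟨hc, hsA.2.trans hs⟩
  obtain hcv | hcv := hc.2.eq_or_lt
  · exact hcv ▸ hcA.2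
  have := nhdsGT_neBot_of_exists_gt ⟨v, hcv⟩
  obtain ⟨s, hs, hcs⟩ := ((hright c ⟨hc.1, hcv⟩).and (Ioo_mem_nhdsGT hcv)).exists
  exact absurd (le_csSup hA ⟨⟨hc.1.trans hcs.1.le, hcs.2.le⟩, hcA.2.trans hs⟩) (not_le.2 hcs.1)

theorem sub_le_mul_sub_of_tendsto_slope {g S k : ℝ → ℝ} {u v M : ℝ} (huv : u ≤ v)
    (hS : StrictMonoOn S (Icc u v))
    (hg : ∀ t ∈ Icc u v,
      Tendsto (fun s => (g s - g t) / (S s - S t)) (𝓝[Icc u v \ {t}] t) (𝓝 (k t)))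
    (hk : ∀ t ∈ Icc u v, k t ≤ M) :
    g v - g u ≤ M * (S v - S u) := by
  have hlim : Tendsto (fun ε => (M + ε) * (S v - S u)) (𝓝[>] 0) (𝓝 (M * (S v - S u))) := by
    refine tendsto_nhdsWithin_of_tendsto_nhds ?_
    exact (by fun_prop : Continuous fun ε : ℝ => (M + ε) * (S v - S u)).tendsto' 0 _ (by simp)
  refine ge_of_tendsto hlim (eventually_nhdsWithin_of_forall fun ε (hε : 0 < ε) => ?_)
  -- the slope of `g` is eventually below `M + ε`, so `(M + ε) * S - g` is locally increasing
  have hslope : ∀ t ∈ Icc u v, ∀ᶠ s in 𝓝[Icc u v \ {t}] t, (g s - g t) / (S s - S t) < M + ε :=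
    fun t ht => (hg t ht).eventually (gt_mem_nhds (by linarith [hk t ht]))
  suffices (M + ε) * S u - g u ≤ (M + ε) * S v - g v by linarith
  refine le_of_eventually_nhdsLT_of_eventually_nhdsGT (φ := fun t => (M + ε) * S t - g t) huv
    (fun t ht => ?_) (fun t ht => ?_)
  · have hmem : Icc u v \ {t} ∈ 𝓝[<] t :=
      mem_of_superset (Ioo_mem_nhdsLT ht.1) fun s hs => ⟨⟨hs.1.le, hs.2.le.trans ht.2⟩, hs.2.ne⟩
    filter_upwards [(hslope t (Ioc_subset_Icc_self ht)).filter_mono (nhdsWithin_le_of_mem hmem),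
      Ioo_mem_nhdsLT ht.1] with s hs hst
    have hΔ : S s - S t < 0 :=
      sub_neg.2 <| hS ⟨hst.1.le, hst.2.le.trans ht.2⟩ (Ioc_subset_Icc_self ht) hst.2
    rw [div_lt_iff_of_neg hΔ] at hs
    linarith
  · have hmem : Icc u v \ {t} ∈ 𝓝[>] t :=
      mem_of_superset (Ioo_mem_nhdsGT ht.2) fun s hs => ⟨⟨ht.1.trans hs.1.le, hs.2.le⟩, hs.1.ne'⟩
    filter_upwards [(hslope t (Ico_subset_Icc_self ht)).filter_mono (nhdsWithin_le_of_mem hmem),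
      Ioo_mem_nhdsGT ht.2] with s hs hst
    have hΔ : 0 < S s - S t :=
      sub_pos.2 <| hS (Ico_subset_Icc_self ht) ⟨ht.1.trans hst.1.le, hst.2.le⟩ hst.1
    rw [div_lt_iff₀ hΔ] at hs
    linarith

theorem mul_sub_le_sub_of_tendsto_slope {g S k : ℝ → ℝ} {u v m : ℝ} (huv : u ≤ v)
    (hS : StrictMonoOn S (Icc u v))
    (hg : ∀ t ∈ Icc u v,
      Tendsto (fun s => (g s - g t) / (S s - S t)) (𝓝[Icc u v \ {t}] t) (𝓝 (k t)))
    (hk : ∀ t ∈ Icc u v, m ≤ k t) :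
    m * (S v - S u) ≤ g v - g u := by
  have := sub_le_mul_sub_of_tendsto_slope (g := -g) (k := -k) (M := -m) huv hS
    (fun t ht => (hg t ht).neg.congr fun s => by simp only [Pi.neg_apply]; ring)
    (fun t ht => neg_le_neg (hk t ht))
  simp only [Pi.neg_apply] at this
  linarith

theorem HasFAlphaDerivAt.tendsto_slope_comp {n : ℕ} {s : Set ℝ}
    {w : ℝ → EuclideanSpace ℝ (Fin n)} {J f : EuclideanSpace ℝ (Fin n) → ℝ} {S : ℝ → ℝ}
    {t : ℝ} {l : ℝ} (hw : ContinuousWithinAt w s t) (hinj : InjOn w s)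
    (hJ : ∀ t ∈ s, J (w t) = S t) (ht : t ∈ s) (hf : HasFAlphaDerivAt (w '' s) J f (w t) l) :
    Tendsto (fun t' => (f (w t') - f (w t)) / (S t' - S t)) (𝓝[s \ {t}] t) (𝓝 l) := by
  refine Metric.tendsto_nhdsWithin_nhds.2 fun ε hε => ?_
  obtain ⟨δ, hδ, hfδ⟩ := hf ε hε
  obtain ⟨η, hη, hwη⟩ := Metric.continuousWithinAt_iff.1 hw δ hδ
  refine ⟨η, hη, fun t' ht' htt' => ?_⟩
  have hne : w t' ≠ w t := fun h => ht'.2 (hinj ht'.1 ht h)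
  have : |(f (w t') - f (w t)) / (J (w t') - J (w t)) - l| < ε :=
    hfδ (w t') (mem_image_of_mem w ht'.1) hne (by rw [← dist_eq_norm]; exact hwη ht'.1 htt')
  rwa [← Real.dist_eq, hJ t' ht'.1, hJ t ht] at this

theorem continuousOn_of_forall_fContinuousAt {n : ℕ} {F : Set (EuclideanSpace ℝ (Fin n))}
    {h : EuclideanSpace ℝ (Fin n) → ℝ} (hh : ∀ θ ∈ F, FContinuousAt F h θ) :
    ContinuousOn h F := by
  refine fun θ hθ => Metric.continuousWithinAt_iff.2 fun ε hε => ?_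
  obtain ⟨δ, hδ, hhδ⟩ := hh θ hθ ε hε
  refine ⟨δ, hδ, fun θ' hθ' hdist => ?_⟩
  rcases eq_or_ne θ' θ with rfl | hne
  · simpa using hε
  · exact hhδ θ' hθ' hne (by rwa [← dist_eq_norm])

namespace Subdivision

variable {a b : ℝ} (P : Subdivision a b)

theorem strictMonoOn : StrictMonoOn P.t (Iic P.k) :=
  strictMonoOn_Iic_of_lt_succ fun m hm => by simpa using P.mono m hm

theorem t_mem_Icc {i : ℕ} (hi : i ≤ P.k) : P.t i ∈ Icc a b := by
  constructor
  · simpa [P.first] using P.strictMonoOn.monotoneOn (Nat.zero_le _) hi (Nat.zero_le i)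
  · simpa [P.last] using P.strictMonoOn.monotoneOn hi (le_refl P.k) hi

theorem Icc_subset {i : ℕ} (hi : i < P.k) : Icc (P.t i) (P.t (i + 1)) ⊆ Icc a b :=
  Icc_subset_Icc (P.t_mem_Icc hi.le).1 (P.t_mem_Icc hi).2

theorem sum_range_sub (g : ℝ → ℝ) :
    ∑ i ∈ Finset.range P.k, (g (P.t (i + 1)) - g (P.t i)) = g b - g a := by
  rw [Finset.sum_range_sub (fun i => g (P.t i)), P.first, P.last]

noncomputable def uniform (hab : a < b) (N : ℕ) (hN : 0 < N) : Subdivision a b where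
  k := N
  t i := a + i * ((b - a) / N)
  first := by simp
  last := by field_simp; ring
  mono i _ := by
    have : 0 < (b - a) / N := div_pos (sub_pos.2 hab) (Nat.cast_pos.2 hN)
    push_cast
    linarith

theorem exists_meshLE (hab : a ≤ b) {δ : ℝ} (hδ : 0 < δ) : ∃ P : Subdivision a b, P.MeshLE δ := by
  rcases hab.eq_or_lt with rfl | hab
  · exact ⟨⟨0, fun _ => a, rfl, rfl, by simp⟩, by simp [MeshLE]⟩
  have hN : 0 < ⌈(b - a) / δ⌉₊ := Nat.ceil_pos.2 (div_pos (sub_pos.2 hab) hδ)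
  refine ⟨uniform hab _ hN, fun i _ => ?_⟩
  have hle : (b - a) / δ ≤ ⌈(b - a) / δ⌉₊ := Nat.le_ceil _
  simp only [uniform]
  push_cast
  rw [div_le_iff₀ hδ] at hle
  rw [show a + (i + 1) * ((b - a) / ⌈(b - a) / δ⌉₊) - (a + i * ((b - a) / ⌈(b - a) / δ⌉₊))
    = (b - a) / ⌈(b - a) / δ⌉₊ by ring, div_le_iff₀ (Nat.cast_pos.2 hN)]
  linarith

end Subdivision

section FSums

variable {n : ℕ} {α a₀ a b : ℝ} {w : ℝ → EuclideanSpace ℝ (Fin n)}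
  {h : EuclideanSpace ℝ (Fin n) → ℝ}

theorem sub_le_upperFSum {g : ℝ → ℝ} (hS : StrictMonoOn (SF α w a₀) (Icc a b))
    (hg : ∀ t ∈ Icc a b, Tendsto (fun s => (g s - g t) / (SF α w a₀ s - SF α w a₀ t))
      (𝓝[Icc a b \ {t}] t) (𝓝 (h (w t))))
    (hbdd : BddAbove (h '' (w '' Icc a b))) (P : Subdivision a b) :
    g b - g a ≤ upperFSum α w a₀ h P := by
  rw [← P.sum_range_sub g, upperFSum]
  refine Finset.sum_le_sum fun i hi => ?_
  have hsub := P.Icc_subset (Finset.mem_range.1 hi)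
  exact sub_le_mul_sub_of_tendsto_slope (P.mono i (Finset.mem_range.1 hi)).le (hS.mono hsub)
    (fun t ht => (hg t (hsub ht)).mono_left (nhdsWithin_mono _ (sdiff_subset_sdiff_left hsub)))
    (fun t ht => le_csSup (hbdd.mono (image_mono (image_mono hsub)))
      (mem_image_of_mem h (mem_image_of_mem w ht)))

theorem lowerFSum_le_sub {g : ℝ → ℝ} (hS : StrictMonoOn (SF α w a₀) (Icc a b))
    (hg : ∀ t ∈ Icc a b, Tendsto (fun s => (g s - g t) / (SF α w a₀ s - SF α w a₀ t))
      (𝓝[Icc a b \ {t}] t) (𝓝 (h (w t))))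
    (hbdd : BddBelow (h '' (w '' Icc a b))) (P : Subdivision a b) :
    lowerFSum α w a₀ h P ≤ g b - g a := by
  rw [← P.sum_range_sub g, lowerFSum]
  refine Finset.sum_le_sum fun i hi => ?_
  have hsub := P.Icc_subset (Finset.mem_range.1 hi)
  exact mul_sub_le_sub_of_tendsto_slope (P.mono i (Finset.mem_range.1 hi)).le (hS.mono hsub)
    (fun t ht => (hg t (hsub ht)).mono_left (nhdsWithin_mono _ (sdiff_subset_sdiff_left hsub)))
    (fun t ht => csInf_le (hbdd.mono (image_mono (image_mono hsub)))
      (mem_image_of_mem h (mem_image_of_mem w ht)))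

theorem exists_upperFSum_sub_lowerFSum_lt (hab : a ≤ b) (hS : MonotoneOn (SF α w a₀) (Icc a b))
    (hh : ContinuousOn (h ∘ w) (Icc a b)) {ε : ℝ} (hε : 0 < ε) :
    ∃ P : Subdivision a b, upperFSum α w a₀ h P - lowerFSum α w a₀ h P < ε := by
  set D := SF α w a₀ b - SF α w a₀ a
  have hD : 0 ≤ D := sub_nonneg.2 (hS (left_mem_Icc.2 hab) (right_mem_Icc.2 hab) hab)
  set ε' := ε / (D + 1)
  have hε' : 0 < ε' := by positivity
  obtain ⟨δ, hδ, hhδ⟩ := Metric.uniformContinuousOn_iff.1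
    (isCompact_Icc.uniformContinuousOn_of_continuous hh) ε' hε'
  obtain ⟨P, hP⟩ := Subdivision.exists_meshLE hab (half_pos hδ)
  have hosc : ∀ i < P.k, sSup (h '' (w '' Icc (P.t i) (P.t (i + 1))))
      - sInf (h '' (w '' Icc (P.t i) (P.t (i + 1)))) ≤ ε' := by
    intro i hi
    have hsub := P.Icc_subset hi
    rw [← image_comp,
      ← Real.diam_eq (isCompact_Icc.image_of_continuousOn (hh.mono hsub)).isBounded]
    refine Metric.diam_le_of_forall_dist_le hε'.le ?_
    rintro _ ⟨s, hs, rfl⟩ _ ⟨s', hs', rfl⟩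
    refine (hhδ s (hsub hs) s' (hsub hs') ?_).le
    linarith [Real.dist_le_of_mem_Icc hs hs', hP i hi]
  have hΔ : ∀ i < P.k, 0 ≤ SF α w a₀ (P.t (i + 1)) - SF α w a₀ (P.t i) := fun i hi =>
    sub_nonneg.2 (hS (P.t_mem_Icc hi.le) (P.t_mem_Icc hi) (P.mono i hi).le)
  refine ⟨P, ?_⟩
  calc upperFSum α w a₀ h P - lowerFSum α w a₀ h P
      = ∑ i ∈ Finset.range P.k, (sSup (h '' (w '' Icc (P.t i) (P.t (i + 1))))
          - sInf (h '' (w '' Icc (P.t i) (P.t (i + 1)))))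
          * (SF α w a₀ (P.t (i + 1)) - SF α w a₀ (P.t i)) := by
        simp only [upperFSum, lowerFSum, ← Finset.sum_sub_distrib, sub_mul]
    _ ≤ ∑ i ∈ Finset.range P.k, ε' * (SF α w a₀ (P.t (i + 1)) - SF α w a₀ (P.t i)) :=
        Finset.sum_le_sum fun i hi => mul_le_mul_of_nonneg_right
          (hosc i (Finset.mem_range.1 hi)) (hΔ i (Finset.mem_range.1 hi))
    _ = ε' * D := by rw [← Finset.mul_sum, P.sum_range_sub]
    _ < ε := by
        rw [div_mul_eq_mul_div, div_lt_iff₀ (by linarith)]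
        nlinarith

theorem hasFIntegral_of_lowerFSum_le_of_le_upperFSum {v : ℝ}
    (hL : ∀ P : Subdivision a b, lowerFSum α w a₀ h P ≤ v)
    (hU : ∀ P : Subdivision a b, v ≤ upperFSum α w a₀ h P)
    (hgap : ∀ ε > 0, ∃ P : Subdivision a b,
      upperFSum α w a₀ h P - lowerFSum α w a₀ h P < ε) :
    HasFIntegral α w a₀ h a b v := by
  obtain ⟨P₀, -⟩ := hgap 1 one_pos
  refine ⟨csInf_eq_of_forall_ge_of_forall_gt_exists_lt ⟨_, P₀, rfl⟩ (forall_mem_range.2 hU)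
    fun x hx => ?_, csSup_eq_of_forall_le_of_forall_lt_exists_gt ⟨_, P₀, rfl⟩
    (forall_mem_range.2 hL) fun x hx => ?_⟩
  · obtain ⟨P, hP⟩ := hgap (x - v) (sub_pos.2 hx)
    exact ⟨_, ⟨P, rfl⟩, by linarith [hL P]⟩
  · obtain ⟨P, hP⟩ := hgap (v - x) (sub_pos.2 hx)
    exact ⟨_, ⟨P, rfl⟩, by linarith [hU P]⟩

end FSums

theorem second_fundamental_theorem_general {n : ℕ} {a₀ b₀ : ℝ}
    (w : ℝ → EuclideanSpace ℝ (Fin n))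
    (hw : ContinuousOn w (Icc a₀ b₀)) (hinj : InjOn w (Icc a₀ b₀))
    {α : ℝ}
    (hS : StrictMonoOn (SF α w a₀) (Icc a₀ b₀))
    (J : EuclideanSpace ℝ (Fin n) → ℝ)
    (hJ : ∀ t ∈ Icc a₀ b₀, J (w t) = SF α w a₀ t)
    {a b : ℝ} (ha : a₀ ≤ a) (hab : a ≤ b) (hb : b ≤ b₀)
    (f h : EuclideanSpace ℝ (Fin n) → ℝ)
    (hdiff : ∀ θ ∈ w '' Icc a b, HasFAlphaDerivAt (w '' Icc a₀ b₀) J f θ (h θ))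
    (hhc : ∀ θ ∈ w '' Icc a₀ b₀, FContinuousAt (w '' Icc a₀ b₀) h θ) :
    HasFIntegral α w a₀ h a b (f (w b) - f (w a)) := by
  have hsub : Icc a b ⊆ Icc a₀ b₀ := Icc_subset_Icc ha hb
  have hslope : ∀ t ∈ Icc a b, Tendsto (fun s => (f (w s) - f (w t)) /
      (SF α w a₀ s - SF α w a₀ t)) (𝓝[Icc a b \ {t}] t) (𝓝 (h (w t))) := fun t ht =>
    ((hdiff (w t) (mem_image_of_mem w ht)).tendsto_slope_comp (hw t (hsub ht)) hinj hJ
      (hsub ht)).mono_left (nhdsWithin_mono _ (sdiff_subset_sdiff_left hsub))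
  have hcont : ContinuousOn (h ∘ w) (Icc a b) :=
    ((continuousOn_of_forall_fContinuousAt hhc).comp hw (mapsTo_image w _)).mono hsub
  have hbdd : Bornology.IsBounded (h '' (w '' Icc a b)) :=
    image_comp h w _ ▸ (isCompact_Icc.image_of_continuousOn hcont).isBounded
  exact hasFIntegral_of_lowerFSum_le_of_le_upperFSum
    (lowerFSum_le_sub (hS.mono hsub) hslope hbdd.bddBelow)
    (sub_le_upperFSum (hS.mono hsub) hslope hbdd.bddAbove)
    fun ε hε => exists_upperFSum_sub_lowerFSum_lt hab (hS.mono hsub).monotoneOn hcont hε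

/-- second fundamental theorem of F^α-calculus: if f is
F^α-differentiable on C(a,b) with F-continuous derivative h, then
∫_{C(a,b)} h dθ = f(w(b)) − f(w(a)). -/
theorem second_fundamental_theorem {n : ℕ} (hn : 1 ≤ n) {a₀ b₀ : ℝ}
    (w : ℝ → EuclideanSpace ℝ (Fin n))
    (hw : ContinuousOn w (Icc a₀ b₀)) (hinj : InjOn w (Icc a₀ b₀))
    {α : ℝ} (hα : α ∈ Icc (1 : ℝ) (n : ℝ))
    (hfin : ∀ t ∈ Icc a₀ b₀, massFn α w a₀ t ≠ ⊤)
    (hS : StrictMonoOn (SF α w a₀) (Icc a₀ b₀))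
    (J : EuclideanSpace ℝ (Fin n) → ℝ)
    (hJ : ∀ t ∈ Icc a₀ b₀, J (w t) = SF α w a₀ t)
    {a b : ℝ} (ha : a₀ ≤ a) (hab : a ≤ b) (hb : b ≤ b₀)
    (f h : EuclideanSpace ℝ (Fin n) → ℝ)
    (hdiff : ∀ θ ∈ w '' Icc a b, HasFAlphaDerivAt (w '' Icc a₀ b₀) J f θ (h θ))
    (hhc : ∀ θ ∈ w '' Icc a₀ b₀, FContinuousAt (w '' Icc a₀ b₀) h θ) :
    HasFIntegral α w a₀ h a b (f (w b) - f (w a)) :=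
  second_fundamental_theorem_general w hw hinj hS J hJ ha hab hb f h hdiff hhc
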